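/- arXiv:1005.1177 — 5 statements merged into one kernel-verified Lean document; each statement's English description precedes it below -/
import Mathlib

section
/- Let p be an odd prime and m = (p-1)/2. Suppose we are given m elements d_1, d_2, ..., d_m of F_p^*. Then there exist 2m pairwise distinct elements x_1, ..., x_m, y_1, ..., y_m of F_p^* such that y_i - x_i = d_i for every i = 1, ..., m. (Equivalently, the nonzero elements of F_p can be partitioned into pairs whose differences are exactly the prescribed values d_1, ..., d_m.) -/
/-!
Alon's polynomial method. For `x : Fin m → 𝔽_p` put `y = x + d`; the polynomial
`P_d = ∏ xᵢ · ∏ yᵢ · V(x) · V(y) · ∏_{i ≠ j} (xᵢ - yⱼ)`, with `V` the Vandermonde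
determinant, is nonzero at `x` exactly when the `2m` points `xᵢ, yᵢ` are distinct and
nonzero. Its degree is `2m² = m(p - 1)`, so by the Chevalley–Warning computation
`∑ₓ P_d(x)` is `(-1)ᵐ` times the coefficient of `∏ xᵢ ^ (p - 1)`, which only sees the top
homogeneous part of `P_d` and so does not depend on `d`. For `d = 1` the pairings are
exactly the rearrangements of the odd residues `1, 3, …, 2m - 1`, on which the symmetric
polynomial `P_1` takes a single nonzero value; hence the sum is
`m! · P_1(1, 3, …, 2m - 1) ≠ 0` and some `P_d(x)` is nonzero.
-/

open Finset

theorem FiniteField.sum_pow_card_sub_one {K : Type*} [Field K] [Fintype K] :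
    ∑ x : K, x ^ (Fintype.card K - 1) = -1 := by
  classical
  have hq : Fintype.card K - 1 ≠ 0 := by
    have := Fintype.one_lt_card (α := K)
    omega
  have h : ∀ x : K, x ^ (Fintype.card K - 1) = 1 - if x = 0 then 1 else 0 := by
    intro x
    split_ifs with hx
    · simp [hx, hq]
    · simp [FiniteField.pow_card_sub_one_eq_one x hx]
  simp [h, sum_sub_distrib]

theorem Fin.two_mul_sum_card_Ioi (n : ℕ) : 2 * ∑ i : Fin n, #(Ioi i) = n * (n - 1) := by
  have h := sum_sum_Ioi_add_eq_sum_sum_off_diag (fun _ _ : Fin n => 1)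
  simp only [Finset.sum_const, smul_eq_mul, mul_one, Finset.card_compl, Finset.card_singleton,
    Finset.card_univ, Fintype.card_fin] at h
  rw [← h, mul_sum]
  exact sum_congr rfl fun i _ => by ring

theorem ZMod.natCast_eq_natCast_iff_of_lt {p a b : ℕ} (ha : a < p) (hb : b < p) :
    (a : ZMod p) = b ↔ a = b := by
  rw [ZMod.natCast_eq_natCast_iff', Nat.mod_eq_of_lt ha, Nat.mod_eq_of_lt hb]

namespace MvPolynomial

section CommRing

variable {σ R : Type*} [CommRing R]

theorem degree_le_totalDegree {f : MvPolynomial σ R} {u : σ →₀ ℕ} (h : coeff u f ≠ 0) :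
    u.degree ≤ f.totalDegree :=
  le_totalDegree (mem_support_iff.mpr h)

def IsTopComponent (n : ℕ) (f g : MvPolynomial σ R) : Prop :=
  f.totalDegree ≤ n ∧ homogeneousComponent n f = g

theorem IsHomogeneous.isTopComponent {g : MvPolynomial σ R} {n : ℕ} (hg : g.IsHomogeneous n) :
    IsTopComponent n g g :=
  ⟨hg.totalDegree_le, homogeneousComponent_eq_self hg⟩

namespace IsTopComponent

variable {n a b : ℕ} {f f' g g' : MvPolynomial σ R}

theorem coeff_eq (h : IsTopComponent n f g) {u : σ →₀ ℕ} (hu : u.degree = n) :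
    coeff u f = coeff u g := by
  rw [← h.2, coeff_homogeneousComponent, if_pos hu]

theorem add (hf : IsTopComponent n f f') (hg : IsTopComponent n g g') :
    IsTopComponent n (f + g) (f' + g') :=
  ⟨(totalDegree_add f g).trans (max_le hf.1 hg.1), by rw [map_add, hf.2, hg.2]⟩

theorem sub (hf : IsTopComponent n f f') (hg : IsTopComponent n g g') :
    IsTopComponent n (f - g) (f' - g') :=
  ⟨(totalDegree_sub f g).trans (max_le hf.1 hg.1), by rw [map_sub, hf.2, hg.2]⟩

theorem mul (hf : IsTopComponent a f f') (hg : IsTopComponent b g g') :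
    IsTopComponent (a + b) (f * g) (f' * g') := by
  classical
  obtain ⟨hf, rfl⟩ := hf
  obtain ⟨hg, rfl⟩ := hg
  refine ⟨(totalDegree_mul f g).trans (add_le_add hf hg), ?_⟩
  ext u
  rw [coeff_homogeneousComponent, coeff_mul, coeff_mul]
  simp only [coeff_homogeneousComponent]
  split_ifs with hu
  · refine sum_congr rfl ?_
    rintro ⟨v, w⟩ hvw
    dsimp only
    have hdeg : v.degree + w.degree = a + b := by
      rw [← map_add, mem_antidiagonal.mp hvw, hu]
    by_cases hv : v.degree = a
    · rw [if_pos hv, if_pos (by omega)]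
    -- a term with `deg v ≠ a` has `deg v > a` or `deg w > b`, so one of its factors vanishes
    rw [if_neg hv, zero_mul]
    by_contra hne
    have := (degree_le_totalDegree (left_ne_zero_of_mul hne)).trans hf
    have := (degree_le_totalDegree (right_ne_zero_of_mul hne)).trans hg
    omega
  · refine (sum_eq_zero ?_).symm
    rintro ⟨v, w⟩ hvw
    split_ifs with hv hw
    · exact absurd (by rw [← mem_antidiagonal.mp hvw, map_add, hv, hw]) hu
    all_goals simp

theorem prod {ι : Type*} {s : Finset ι} {n : ι → ℕ} {f g : ι → MvPolynomial σ R}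
    (h : ∀ i ∈ s, IsTopComponent (n i) (f i) (g i)) :
    IsTopComponent (∑ i ∈ s, n i) (∏ i ∈ s, f i) (∏ i ∈ s, g i) := by
  induction s using Finset.cons_induction with
  | empty => simpa using (isHomogeneous_one σ R).isTopComponent
  | cons a s ha ih =>
    rw [sum_cons, prod_cons, prod_cons]
    exact (h a (mem_cons_self a s)).mul (ih fun i hi => h i (mem_cons_of_mem hi))

end IsTopComponent

theorem isTopComponent_X_add_C (i : σ) (c : R) : IsTopComponent 1 (X i + C c) (X i) := by
  simpa using (isHomogeneous_X R i).isTopComponent.add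
    (⟨(totalDegree_C c).trans_le zero_le_one, homogeneousComponent_eq_zero _ _ (by simp)⟩ :
      IsTopComponent 1 (C c) 0)

theorem isTopComponent_det_vandermonde {n : ℕ} {v w : Fin n → MvPolynomial σ R}
    (h : ∀ i, IsTopComponent 1 (v i) (w i)) :
    IsTopComponent (∑ i : Fin n, #(Ioi i)) (Matrix.vandermonde v).det
      (Matrix.vandermonde w).det := by
  simp only [Matrix.det_vandermonde, card_eq_sum_ones]
  exact IsTopComponent.prod fun i _ => IsTopComponent.prod fun j _ => (h j).sub (h i)

end CommRing

theorem sum_eval_eq_neg_one_pow_mul_coeff {K σ : Type*} [Field K] [Fintype K] [Fintype σ]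
    [DecidableEq σ] (f : MvPolynomial σ K)
    (hf : f.totalDegree ≤ Fintype.card σ * (Fintype.card K - 1))
    (M : σ →₀ ℕ) (hM : ∀ i, M i = Fintype.card K - 1) :
    ∑ x : σ → K, eval x f = (-1) ^ Fintype.card σ * coeff M f := by
  have hvanish : ∀ u ∈ f.support, u ≠ M → ∏ i, ∑ t : K, t ^ u i = 0 := by
    intro u hu hne
    obtain ⟨i, hi⟩ : ∃ i, u i < Fintype.card K - 1 := by
      by_contra! hge
      have hsum : ∑ i, u i ≤ ∑ _i : σ, (Fintype.card K - 1) := by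
        simpa [← Finsupp.degree_eq_sum, mul_comm] using
          (degree_le_totalDegree (mem_support_iff.mp hu)).trans hf
      have heq := (sum_eq_sum_iff_of_le fun i _ => hge i).mp
        (le_antisymm (sum_le_sum fun i _ => hge i) hsum)
      exact hne (Finsupp.ext fun i => by rw [hM, heq i (mem_univ i)])
    exact prod_eq_zero (mem_univ i) (FiniteField.sum_pow_lt_card_sub_one K _ hi)
  calc ∑ x : σ → K, eval x f
      = ∑ u ∈ f.support, coeff u f * ∏ i, ∑ t : K, t ^ u i := by
        simp only [eval_eq', Fintype.prod_sum, mul_sum]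
        exact sum_comm
    _ = coeff M f * ∏ i, ∑ t : K, t ^ M i :=
        sum_eq_single M (fun u hu hne => by rw [hvanish u hu hne, mul_zero])
          (fun hM => by rw [notMem_support_iff.mp hM, zero_mul])
    _ = (-1) ^ Fintype.card σ * coeff M f := by
        simp [hM, FiniteField.sum_pow_card_sub_one, mul_comm]

end MvPolynomial

namespace DifferencePairing

open MvPolynomial Matrix

variable {m : ℕ}

section CommRing

variable {R : Type*} [CommRing R]

def IsPairing (d x : Fin m → R) : Prop :=
  (∀ k, Sum.elim x (x + d) k ≠ 0) ∧ Function.Injective (Sum.elim x (x + d))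

noncomputable def pairingPoly (d : Fin m → R) : MvPolynomial (Fin m) R :=
  (∏ i, X i) * (∏ i, (X i + C (d i))) * (vandermonde X).det *
    (vandermonde fun i => X i + C (d i)).det *
    ∏ ij ∈ (univ : Finset (Fin m)).offDiag, (X ij.1 - (X ij.2 + C (d ij.2)))

theorem eval_pairingPoly (d x : Fin m → R) :
    eval x (pairingPoly d) = (∏ i, x i) * (∏ i, (x i + d i)) * (vandermonde x).det *
      (vandermonde (x + d)).det *
      ∏ ij ∈ (univ : Finset (Fin m)).offDiag, (x ij.1 - (x ij.2 + d ij.2)) := by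
  simp [pairingPoly, det_vandermonde, map_prod]

theorem eval_pairingPoly_ne_zero_iff [IsDomain R] {d : Fin m → R} (hd : ∀ i, d i ≠ 0)
    (x : Fin m → R) : eval x (pairingPoly d) ≠ 0 ↔ IsPairing d x := by
  simp only [eval_pairingPoly, IsPairing, Sum.forall, Sum.elim_inl, Sum.elim_inr,
    Sum.elim_injective, mul_ne_zero_iff, prod_ne_zero_iff, det_vandermonde_ne_zero_iff,
    mem_univ, true_imp_iff, mem_offDiag, true_and, Prod.forall, sub_ne_zero, Pi.add_apply]
  have hcross : (∀ i j, i ≠ j → x i ≠ x j + d j) ↔ ∀ i j, x i ≠ x j + d j := by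
    refine forall₂_congr fun i j => ⟨fun h => ?_, fun h _ => h⟩
    rcases eq_or_ne i j with rfl | hij
    · simpa using hd i
    · exact h hij
  rw [hcross]
  tauto

theorem isTopComponent_pairingPoly (d : Fin m → R) :
    IsTopComponent (2 * m * m) (pairingPoly d) (pairingPoly 0) := by
  have hX : ∀ i, IsTopComponent 1 (X i : MvPolynomial (Fin m) R) (X i) := fun i =>
    (isHomogeneous_X R i).isTopComponent
  have h := ((((IsTopComponent.prod (s := univ) fun i _ => hX i).mul
    (IsTopComponent.prod (s := univ) fun i _ => isTopComponent_X_add_C i (d i))).mul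
    (isTopComponent_det_vandermonde hX)).mul
    (isTopComponent_det_vandermonde fun i => isTopComponent_X_add_C i (d i))).mul
    (IsTopComponent.prod (s := (univ : Finset (Fin m)).offDiag) fun ij _ =>
      (hX ij.1).sub (isTopComponent_X_add_C ij.2 (d ij.2)))
  have hN : ∑ i : Fin m, 1 + ∑ i : Fin m, 1 + ∑ i : Fin m, #(Ioi i) +
      ∑ i : Fin m, #(Ioi i) + ∑ ij ∈ (univ : Finset (Fin m)).offDiag, 1 = 2 * m * m := by
    have := Fin.two_mul_sum_card_Ioi m
    simp only [sum_const, card_univ, Fintype.card_fin, smul_eq_mul, mul_one, offDiag_card]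
    rw [← Nat.mul_sub_one]
    have : m * (m - 1) + m = m * m := by
      rw [Nat.mul_sub_one, Nat.sub_add_cancel (Nat.le_mul_self m)]
    linarith
  rw [hN] at h
  simpa [pairingPoly] using h

theorem eval_pairingPoly_one_comp_perm (x : Fin m → R) (σ : Equiv.Perm (Fin m)) :
    eval (x ∘ σ) (pairingPoly 1) = eval x (pairingPoly 1) := by
  have hV : ∀ y : Fin m → R, (vandermonde (y + 1)).det = (vandermonde y).det :=
    fun y => det_vandermonde_add y 1
  have hsign : (vandermonde (x ∘ σ)).det * (vandermonde (x ∘ σ)).det =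
      (vandermonde x).det * (vandermonde x).det := by
    rw [show vandermonde (x ∘ σ) = (vandermonde x).submatrix σ id from rfl, det_permute,
      mul_mul_mul_comm, ← Int.cast_mul, ← Units.val_mul, Int.units_mul_self, Units.val_one,
      Int.cast_one, one_mul]
  have hoff : ∏ ij ∈ (univ : Finset (Fin m)).offDiag, (x (σ ij.1) - (x (σ ij.2) + 1)) =
      ∏ ij ∈ (univ : Finset (Fin m)).offDiag, (x ij.1 - (x ij.2 + 1)) :=
    prod_equiv (σ.prodCongr σ) (by simp) (by simp)
  simp only [eval_pairingPoly, hV, Pi.one_apply, Function.comp_apply, hoff, Equiv.prod_comp σ x,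
    Equiv.prod_comp σ (fun i => x i + 1)]
  linear_combination ((∏ i, x i) * (∏ i, (x i + 1)) *
    ∏ ij ∈ (univ : Finset (Fin m)).offDiag, (x ij.1 - (x ij.2 + 1))) * hsign

end CommRing

theorem sum_eval_pairingPoly_eq {K : Type*} [Field K] [Fintype K]
    (hK : Fintype.card K = 2 * m + 1) (d e : Fin m → K) :
    ∑ x, eval x (pairingPoly d) = ∑ x, eval x (pairingPoly e) := by
  obtain ⟨M, hM⟩ : ∃ M : Fin m →₀ ℕ, ∀ i, M i = Fintype.card K - 1 :=
    ⟨Finsupp.equivFunOnFinite.symm fun _ => _, fun _ => rfl⟩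
  have hMdeg : M.degree = 2 * m * m := by
    simp only [Finsupp.degree_eq_sum, hM, hK, sum_const, card_univ, Fintype.card_fin,
      smul_eq_mul, Nat.add_sub_cancel]
    ring
  have hdeg : 2 * m * m = Fintype.card (Fin m) * (Fintype.card K - 1) := by
    rw [Fintype.card_fin, hK, Nat.add_sub_cancel]
    ring
  rw [sum_eval_eq_neg_one_pow_mul_coeff _ (hdeg ▸ (isTopComponent_pairingPoly d).1) M hM,
    sum_eval_eq_neg_one_pow_mul_coeff _ (hdeg ▸ (isTopComponent_pairingPoly e).1) M hM,
    (isTopComponent_pairingPoly d).coeff_eq hMdeg, (isTopComponent_pairingPoly e).coeff_eq hMdeg]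

theorem IsPairing.forall_ne_zero_mem_range {K : Type*} [CommRing K] [Fintype K]
    (hK : Fintype.card K = 2 * m + 1) {d x : Fin m → K} (hx : IsPairing d x) {t : K}
    (ht : t ≠ 0) : t ∈ Set.range (Sum.elim x (x + d)) := by
  classical
  let z : Fin m ⊕ Fin m → {t : K // t ≠ 0} := fun k => ⟨_, hx.1 k⟩
  have hz : Function.Injective z := fun k l h => hx.2 (congrArg Subtype.val h)
  have hcard : Fintype.card (Fin m ⊕ Fin m) = Fintype.card {t : K // t ≠ 0} := by
    simp [Fintype.card_subtype_compl, hK]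
    omega
  obtain ⟨k, hk⟩ :=
    ((Fintype.bijective_iff_injective_and_card z).mpr ⟨hz, hcard⟩).surjective ⟨t, ht⟩
  exact ⟨k, congrArg Subtype.val hk⟩

variable {p : ℕ}

def oddResidues (m p : ℕ) : Fin m → ZMod p := fun i => ((2 * i + 1 : ℕ) : ZMod p)

theorem isPairing_one_oddResidues (hp : p = 2 * m + 1) : IsPairing 1 (oddResidues m p) := by
  let n : Fin m ⊕ Fin m → ℕ := Sum.elim (fun i => 2 * i + 1) (fun i => 2 * i + 2)
  have hn : ∀ k, 0 < n k ∧ n k < p := by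
    rintro (i | i) <;> simp [n] <;> omega
  have hn_inj : Function.Injective n := by
    rintro (i | i) (j | j) h <;> simp [n, Fin.ext_iff] at h ⊢ <;> omega
  have hpts : Sum.elim (oddResidues m p) (oddResidues m p + 1) = fun k => (n k : ZMod p) := by
    funext k
    rcases k with i | i <;> simp [n, oddResidues]
    ring
  rw [IsPairing, hpts]
  refine ⟨fun k h => (hn k).1.ne' ((ZMod.natCast_eq_natCast_iff_of_lt (hn k).2 (by omega)).mp
    (by simpa using h)), fun k l h => hn_inj ?_⟩
  exact (ZMod.natCast_eq_natCast_iff_of_lt (hn k).2 (hn l).2).mp h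

theorem IsPairing.natCast_mem_range_iff_odd (hp : p = 2 * m + 1) {x : Fin m → ZMod p}
    (hx : IsPairing 1 x) {n : ℕ} (hn : n ≤ 2 * m) : (n : ZMod p) ∈ Set.range x ↔ Odd n := by
  induction n with
  | zero => simpa using fun i => hx.1 (.inl i)
  | succ n ih =>
    have : NeZero p := ⟨by omega⟩
    have hn0 : ((n + 1 : ℕ) : ZMod p) ≠ 0 := by
      rw [Ne, ← Nat.cast_zero, ZMod.natCast_eq_natCast_iff_of_lt (by omega) (by omega)]
      omega
    -- `n + 1` is either some `x i` or some `x i + 1`, but not both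
    obtain ⟨k, hk⟩ := hx.forall_ne_zero_mem_range (by rw [ZMod.card, hp]) hn0
    rw [Nat.odd_add_one, ← ih (by omega)]
    constructor
    · rintro ⟨i, hi⟩ ⟨j, hj⟩
      refine Sum.inl_ne_inr (hx.2 (a₁ := .inl i) (a₂ := .inr j) ?_)
      simp [hi, hj]
    · intro hn'
      rcases k with i | i
      · exact ⟨i, by simpa using hk⟩
      · exact absurd ⟨i, by simpa using hk⟩ hn'

theorem exists_perm_of_isPairing_one (hp : p = 2 * m + 1) {x : Fin m → ZMod p}
    (hx : IsPairing 1 x) : ∃ σ : Equiv.Perm (Fin m), x = oddResidues m p ∘ σ := by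
  have : NeZero p := ⟨by omega⟩
  have hodd : ∀ i, ∃ j, x i = oddResidues m p j := by
    intro i
    have hval : ((x i).val : ZMod p) = x i := ZMod.natCast_zmod_val (x i)
    have hpos : (x i).val ≠ 0 := by
      rw [Ne, ZMod.val_eq_zero]
      exact hx.1 (.inl i)
    have hlt := ZMod.val_lt (x i)
    obtain ⟨k, hk⟩ := (hx.natCast_mem_range_iff_odd hp (by omega)).mp ⟨i, hval.symm⟩
    exact ⟨⟨k, by omega⟩, by rw [← hval, hk]; rfl⟩
  choose σ hσ using hodd
  have hσ_inj : Function.Injective σ := fun i j h =>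
    (hx.2.comp Sum.inl_injective) (by simp [hσ i, hσ j, h])
  exact ⟨Equiv.ofBijective σ (Finite.injective_iff_bijective.mp hσ_inj), funext hσ⟩

theorem sum_eval_pairingPoly_one_ne_zero [Fact p.Prime] (hp : p = 2 * m + 1) :
    ∑ x, eval x (pairingPoly (1 : Fin m → ZMod p)) ≠ 0 := by
  have hodd := isPairing_one_oddResidues hp
  have hinj : Function.Injective fun σ : Equiv.Perm (Fin m) => oddResidues m p ∘ σ :=
    fun σ τ h => Equiv.ext fun i => (hodd.2.comp Sum.inl_injective) (congrFun h i)
  have hsum : ∑ x, eval x (pairingPoly (1 : Fin m → ZMod p)) =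
      ∑ σ : Equiv.Perm (Fin m), eval (oddResidues m p ∘ σ) (pairingPoly 1) := by
    refine (Fintype.sum_of_injective _ hinj _ _ (fun x hx => ?_) fun _ => rfl).symm
    by_contra h
    obtain ⟨σ, rfl⟩ := exists_perm_of_isPairing_one hp
      ((eval_pairingPoly_ne_zero_iff (fun _ => one_ne_zero) x).mp h)
    exact hx ⟨σ, rfl⟩
  rw [hsum, sum_congr rfl fun σ _ => eval_pairingPoly_one_comp_perm _ σ, sum_const, card_univ,
    Fintype.card_perm, Fintype.card_fin, nsmul_eq_mul]
  refine mul_ne_zero ?_ ((eval_pairingPoly_ne_zero_iff (fun _ => one_ne_zero) _).mpr hodd)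
  rw [Ne, ZMod.natCast_eq_zero_iff, (Fact.out : p.Prime).dvd_factorial]
  omega

theorem exists_isPairing [Fact p.Prime] (hp : p = 2 * m + 1) {d : Fin m → ZMod p}
    (hd : ∀ i, d i ≠ 0) : ∃ x, IsPairing d x := by
  have hsum : ∑ x, eval x (pairingPoly d) ≠ 0 := by
    rw [sum_eval_pairingPoly_eq (by rw [ZMod.card, hp]) d 1]
    exact sum_eval_pairingPoly_one_ne_zero hp
  obtain ⟨x, -, hx⟩ := exists_ne_zero_of_sum_ne_zero hsum
  exact ⟨x, (eval_pairingPoly_ne_zero_iff hd x).mp hx⟩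

end DifferencePairing

/-- Partition of the nonzero elements of `F_p` (p an odd prime) into
pairs with prescribed differences `d i`. -/
theorem partition_Fp_pairs (p : ℕ) (hp : p.Prime) (hodd : Odd p)
    (m : ℕ) (hm : m = (p - 1) / 2)
    (d : Fin m → ZMod p) (hd : ∀ i, d i ≠ 0) :
    ∃ x y : Fin m → ZMod p,
      (∀ i, x i ≠ 0) ∧ (∀ i, y i ≠ 0) ∧
      Function.Injective (Sum.elim x y) ∧
      ∀ i, y i - x i = d i := by
  have : Fact p.Prime := ⟨hp⟩
  have hp2 : p = 2 * m + 1 := by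
    obtain ⟨k, rfl⟩ := hodd
    omega
  obtain ⟨x, hx0, hx⟩ := DifferencePairing.exists_isPairing hp2 hd
  exact ⟨x, x + d, fun i => hx0 (.inl i), fun i => hx0 (.inr i), hx,
    fun i => add_sub_cancel_left _ _⟩
end

section
/- Suppose a polynomial f(x_1, ..., x_n) over a field F has total degree at most c_1 + c_2 + ... + c_n, where the c_i are non-negative integers, and let C denote the coefficient of the monomial x_1^{c_1} x_2^{c_2} ... x_n^{c_n} in f (possibly C = 0). Let A_1, ..., A_n be finite subsets of F with |A_i| = c_i + 1 for each i, and set φ_i(x) = ∏_{α ∈ A_i} (x - α). Then C = Σ_{α_1 ∈ A_1, ..., α_n ∈ A_n} f(α_1, ..., α_n) / (φ_1'(α_1) ⋯ φ_n'(α_n)). -/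
/-!
Both sides are linear in `f`, so it suffices to treat a monomial `x^d` with `∑ dᵢ ≤ ∑ cᵢ`. For it
the right-hand side factors as `∏ᵢ ∑_{a ∈ Aᵢ} a^{dᵢ} / φᵢ'(a)`, and Lagrange interpolation on the
`cᵢ + 1` nodes `Aᵢ` identifies the `i`-th factor with the coefficient of `x^{cᵢ}` in `x^{dᵢ}`
whenever `dᵢ ≤ cᵢ`. If `d ≠ c`, the degree bound forces `dᵢ < cᵢ` for some `i`, and that factor
vanishes.
-/

open Finset Polynomial

section OneVariable

variable {F : Type*} [Field F] {s : Finset F}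

theorem Polynomial.coeff_card_sub_one_eq_sum_div_eval_derivative_prod_X_sub_C {p : F[X]}
    (hp : p.degree < #s) :
    p.coeff (#s - 1) = ∑ a ∈ s, p.eval a / (∏ b ∈ s, (X - C b)).derivative.eval a := by
  classical
  rw [Lagrange.coeff_eq_sum (v := id) (Set.injOn_id _) hp]
  refine sum_congr rfl fun a ha => ?_
  change _ = p.eval a / (Lagrange.nodal s id).derivative.eval (id a)
  rw [Lagrange.eval_nodal_derivative_eval_node_eq ha, Lagrange.eval_nodal]
  rfl

theorem Polynomial.sum_pow_div_eval_derivative_prod_X_sub_C {m d : ℕ} (hs : #s = m + 1)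
    (hd : d ≤ m) :
    ∑ a ∈ s, a ^ d / (∏ b ∈ s, (X - C b)).derivative.eval a = if d = m then 1 else 0 := by
  have hdeg : (X ^ d : F[X]).degree < #s := by
    rw [degree_X_pow, hs]
    exact_mod_cast Nat.lt_succ_of_le hd
  have h := coeff_card_sub_one_eq_sum_div_eval_derivative_prod_X_sub_C hdeg
  simp only [eval_pow, eval_X, hs, Nat.add_sub_cancel, coeff_X_pow] at h
  rw [← h]
  exact if_congr eq_comm rfl rfl

end OneVariable

theorem Fintype.exists_lt_of_sum_le_of_ne {ι M : Type*} [Fintype ι] [AddCommMonoid M]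
    [LinearOrder M] [IsOrderedCancelAddMonoid M] {d c : ι → M}
    (hsum : ∑ i, d i ≤ ∑ i, c i) (hne : d ≠ c) : ∃ i, d i < c i := by
  by_contra! hcd
  obtain ⟨i, hi⟩ := Function.ne_iff.mp hne
  exact hsum.not_gt <| sum_lt_sum (fun j _ => hcd j) ⟨i, mem_univ i, (hcd i).lt_of_ne' hi⟩

theorem MvPolynomial.sum_piFinset_eval_div_prod {σ F : Type*} [Fintype σ] [DecidableEq σ]
    [Field F] (f : MvPolynomial σ F) (A : σ → Finset F) (g : σ → F → F) :
    ∑ α ∈ Fintype.piFinset A, eval α f / ∏ i, g i (α i) =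
      ∑ d ∈ f.support, coeff d f * ∏ i, ∑ a ∈ A i, a ^ d i / g i a := by
  simp_rw [eval_eq', sum_div, mul_div_assoc, ← prod_div_distrib]
  rw [sum_comm]
  simp_rw [← mul_sum, prod_univ_sum]

theorem prod_sum_pow_div_eval_derivative_prod_X_sub_C {σ F : Type*} [Fintype σ] [DecidableEq σ]
    [Field F] {A : σ → Finset F} {c d : σ →₀ ℕ} (hA : ∀ i, #(A i) = c i + 1)
    (hd : d.degree ≤ c.degree) :
    ∏ i, ∑ a ∈ A i, a ^ d i / (∏ b ∈ A i, (X - C b)).derivative.eval a =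
      if d = c then 1 else 0 := by
  split_ifs with hdc
  · subst hdc
    exact prod_eq_one fun i _ => by
      rw [sum_pow_div_eval_derivative_prod_X_sub_C (hA i) le_rfl, if_pos rfl]
  · rw [Finsupp.degree_eq_sum, Finsupp.degree_eq_sum] at hd
    obtain ⟨i, hi⟩ := Fintype.exists_lt_of_sum_le_of_ne hd (DFunLike.coe_injective.ne hdc)
    exact prod_eq_zero (mem_univ i) <| by
      rw [sum_pow_div_eval_derivative_prod_X_sub_C (hA i) hi.le, if_neg hi.ne]

/-- Combinatorial Nullstellensatz, coefficient formula. -/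
theorem combinatorial_nullstellensatz_coeff (F : Type*) [Field F] (n : ℕ)
    (c : Fin n → ℕ) (f : MvPolynomial (Fin n) F)
    (hdeg : f.totalDegree ≤ ∑ i, c i)
    (A : Fin n → Finset F) (hA : ∀ i, (A i).card = c i + 1) :
    MvPolynomial.coeff (Finsupp.equivFunOnFinite.symm c) f =
      ∑ α ∈ Fintype.piFinset A,
        MvPolynomial.eval α f /
          ∏ i, Polynomial.eval (α i)
            (Polynomial.derivative
              (∏ a ∈ A i, (Polynomial.X - Polynomial.C a))) := by
  set c' := Finsupp.equivFunOnFinite.symm c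
  have hdeg' : ∀ d ∈ f.support, d.degree ≤ c'.degree := fun d hd => by
    rw [Finsupp.degree_eq_sum c']
    exact (MvPolynomial.le_totalDegree hd).trans hdeg
  calc MvPolynomial.coeff c' f
      = ∑ d ∈ f.support, MvPolynomial.coeff d f * if d = c' then 1 else 0 := by
        rw [sum_eq_single c' (fun d _ hd => by rw [if_neg hd, mul_zero])
          (fun hc => by rw [MvPolynomial.notMem_support_iff.mp hc, zero_mul]), if_pos rfl, mul_one]
    _ = ∑ d ∈ f.support, MvPolynomial.coeff d f *
          ∏ i, ∑ a ∈ A i, a ^ d i / eval a (derivative (∏ b ∈ A i, (X - C b))) :=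
        sum_congr rfl fun d hd => by
          rw [prod_sum_pow_div_eval_derivative_prod_X_sub_C (c := c') hA (hdeg' d hd)]
    _ = _ := (MvPolynomial.sum_piFinset_eval_div_prod f A
          fun i a => eval a (derivative (∏ b ∈ A i, (X - C b)))).symm
end

section
/- Suppose a polynomial f(x_1, ..., x_n) over a field F has total degree at most c_1 + c_2 + ... + c_n, where the c_i are non-negative integers, and suppose the coefficient of the monomial x_1^{c_1} x_2^{c_2} ... x_n^{c_n} in f is nonzero. Let A_1, ..., A_n be finite subsets of F with |A_i| = c_i + 1 for each i. Then there exists a system of representatives α_i ∈ A_i such that f(α_1, α_2, ..., α_n) ≠ 0. -/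
open Polynomial Finset

/-- Leading-coefficient extraction of a Lagrange basis polynomial. -/
lemma coeff_lagrange_basis {F : Type*} [Field F] [DecidableEq F] (s : Finset F) (c : ℕ)
    (hs : s.card = c + 1) {a : F} (ha : a ∈ s) :
    (Lagrange.basis s id a).coeff c = Lagrange.nodalWeight s id a := by
  have hinj : Set.InjOn (id : F → F) s := fun x _ y _ h => h
  have h1 : Lagrange.basis s id a
      = Polynomial.C (Lagrange.nodalWeight s id a) * Lagrange.nodal (s.erase a) id := by
    rw [Lagrange.basis_eq_prod_sub_inv_mul_nodal_div ha, Lagrange.nodal_erase_eq_nodal_div ha]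
  have hcard : (s.erase a).card = c := by
    rw [card_erase_of_mem ha, hs]; rfl
  have hmonic : (Lagrange.nodal (s.erase a) id).Monic := Lagrange.nodal_monic
  have hdeg : (Lagrange.nodal (s.erase a) id).natDegree = c := by
    rw [Lagrange.natDegree_nodal, hcard]
  rw [h1, Polynomial.coeff_C_mul, ← hdeg, hmonic.coeff_natDegree, mul_one]

/-- The single-variable weighted power sum. -/
lemma weighted_power_sum {F : Type*} [Field F] [DecidableEq F] (s : Finset F) (c d : ℕ)
    (hs : s.card = c + 1) (hd : d ≤ c) :
    ∑ a ∈ s, a ^ d * Lagrange.nodalWeight s id a = if d = c then 1 else 0 := by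
  have hinj : Set.InjOn (id : F → F) s := fun x _ y _ h => h
  have hdeg : ((X : F[X]) ^ d).degree < s.card := by
    rw [hs, Polynomial.degree_X_pow]
    exact_mod_cast Nat.lt_succ_of_le hd
  have h := Lagrange.eq_interpolate hinj hdeg
  have h2 := congrArg (fun p : F[X] => p.coeff c) h
  simp only [Lagrange.interpolate_apply, Polynomial.finset_sum_coeff,
    Polynomial.coeff_C_mul, Polynomial.coeff_X_pow] at h2
  rw [show ((if c = d then (1:F) else 0) = if d = c then 1 else 0) by
    by_cases h : d = c <;> simp [h, Ne.symm, eq_comm]] at h2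
  refine Eq.trans ?_ h2.symm
  refine Finset.sum_congr rfl fun a ha => ?_
  rw [Polynomial.eval_pow, Polynomial.eval_X, id, coeff_lagrange_basis s c hs ha]

/-- Combinatorial Nullstellensatz, existence form. -/
theorem combinatorial_nullstellensatz (F : Type*) [Field F] (n : ℕ)
    (c : Fin n → ℕ) (f : MvPolynomial (Fin n) F)
    (hdeg : f.totalDegree ≤ ∑ i, c i)
    (hcoeff : MvPolynomial.coeff (Finsupp.equivFunOnFinite.symm c) f ≠ 0)
    (A : Fin n → Finset F) (hA : ∀ i, (A i).card = c i + 1) :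
    ∃ α : Fin n → F, (∀ i, α i ∈ A i) ∧ MvPolynomial.eval α f ≠ 0 := by
  classical
  set c' : Fin n →₀ ℕ := Finsupp.equivFunOnFinite.symm c with hc'
  -- key identity: coeff c' f = ∑ over grid of eval α f * weight α
  have key : (∑ α ∈ Fintype.piFinset A, MvPolynomial.eval α f *
        ∏ i, Lagrange.nodalWeight (A i) id (α i)) = MvPolynomial.coeff c' f := by
    have expand : ∀ α : Fin n → F, MvPolynomial.eval α f =
        ∑ d ∈ f.support, MvPolynomial.coeff d f * ∏ i, α i ^ d i := fun α =>
      MvPolynomial.eval_eq' α f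
    calc ∑ α ∈ Fintype.piFinset A, MvPolynomial.eval α f *
          ∏ i, Lagrange.nodalWeight (A i) id (α i)
        = ∑ α ∈ Fintype.piFinset A, ∑ d ∈ f.support,
            MvPolynomial.coeff d f * ∏ i, (α i ^ d i * Lagrange.nodalWeight (A i) id (α i)) := by
          refine Finset.sum_congr rfl fun α _ => ?_
          rw [expand α, Finset.sum_mul]
          refine Finset.sum_congr rfl fun d _ => ?_
          rw [mul_assoc, Finset.prod_mul_distrib]
      _ = ∑ d ∈ f.support, MvPolynomial.coeff d f *
            ∑ α ∈ Fintype.piFinset A, ∏ i, (α i ^ d i * Lagrange.nodalWeight (A i) id (α i)) := by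
          rw [Finset.sum_comm]
          exact Finset.sum_congr rfl fun d _ => (Finset.mul_sum _ _ _).symm
      _ = ∑ d ∈ f.support, MvPolynomial.coeff d f *
            ∏ i, ∑ a ∈ A i, a ^ d i * Lagrange.nodalWeight (A i) id a := by
          refine Finset.sum_congr rfl fun d _ => ?_
          rw [Finset.prod_univ_sum]
      _ = MvPolynomial.coeff c' f := by
          rw [Finset.sum_eq_single c']
          · by_cases hc : ∀ i, c' i = c i
            · have : ∏ i, ∑ a ∈ A i, a ^ c' i * Lagrange.nodalWeight (A i) id a = 1 := by
                refine Finset.prod_eq_one fun i _ => ?_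
                rw [weighted_power_sum (A i) (c i) (c' i) (hA i) (le_of_eq (hc i)), if_pos (hc i)]
              rw [this, mul_one]
            · exact absurd (fun i => congrFun (Finsupp.equivFunOnFinite.apply_symm_apply c) i) hc
          · intro d hd hdc
            -- some coordinate of d is < c
            have hsum : ∑ i, d i ≤ ∑ i, c i := by
              refine le_trans ?_ hdeg
              refine le_trans (le_of_eq ?_) (MvPolynomial.le_totalDegree hd)
              rw [Finsupp.sum_fintype]
              intro i; rfl
            have hex : ∃ i, d i < c i := by
              by_contra hcon
              push_neg at hcon
              apply hdc
              have : ∀ i, d i = c i := by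
                intro i
                by_contra hne
                have hlt : c i < d i := lt_of_le_of_ne (hcon i) (Ne.symm hne)
                have : ∑ i, c i < ∑ i, d i :=
                  Finset.sum_lt_sum (fun j _ => hcon j) ⟨i, Finset.mem_univ i, hlt⟩
                omega
              ext i
              rw [this i]
              exact (congrFun (Finsupp.equivFunOnFinite.apply_symm_apply c) i).symm
            obtain ⟨i, hi⟩ := hex
            have : ∑ a ∈ A i, a ^ d i * Lagrange.nodalWeight (A i) id a = 0 := by
              rw [weighted_power_sum (A i) (c i) (d i) (hA i) (le_of_lt hi), if_neg (Nat.ne_of_lt hi)]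
            rw [Finset.prod_eq_zero (Finset.mem_univ i) this, mul_zero]
          · intro h
            rw [MvPolynomial.notMem_support_iff.mp h, zero_mul]
  -- conclude
  have : ∃ α ∈ Fintype.piFinset A, MvPolynomial.eval α f *
      ∏ i, Lagrange.nodalWeight (A i) id (α i) ≠ 0 := by
    by_contra hcon
    push_neg at hcon
    exact hcoeff (key.symm.trans (Finset.sum_eq_zero hcon))
  obtain ⟨α, hα, hne⟩ := this
  exact ⟨α, fun i => Fintype.mem_piFinset.mp hα i, fun h => hne (by rw [h, zero_mul])⟩
end

section
/- (Dyson's conjecture.) Let a_1, ..., a_n be positive integers and set a = a_1 + ... + a_n. Then the coefficient of the monomial ∏_{i=1}^n x_i^{a - a_i} in the integer polynomial f(x_1, ..., x_n) = ∏_{1 ≤ i < j ≤ n} (-1)^{a_j} (x_j - x_i)^{a_i + a_j} equals the multinomial coefficient a! / (a_1! a_2! ⋯ a_n!). (Equivalently, the constant term of ∏_{1 ≤ i ≠ j ≤ n} (1 - x_i/x_j)^{a_i}, viewed as a Laurent polynomial over the integers, equals a!/(a_1! ⋯ a_n!).) -/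
/-!
Good's proof. Put `D_S(a) = ∏_{i ≠ j ∈ S} (x_j - x_i) ^ a_i`; over a linear order this is the
product `∏_{i < j} (-1) ^ a_j (x_j - x_i) ^ (a_i + a_j)` of the theorem. We show by induction on
`|S| + ∑ a_i` that the coefficient of `∏_{i ∈ S} x_i ^ (∑_{j ∈ S, j ≠ i} a_j)` in `D_S(a)` is the
multinomial coefficient `M_S(a)`.

If all `a_k` are positive, Lagrange interpolation of the constant `1` at the points `x_k`,
evaluated at `0`, reads `∑_k ∏_{j ≠ k} x_j / (x_j - x_k) = 1`; since
`D_S(a) = D_S(a - e_k) ∏_{j ≠ k} (x_j - x_k)`, this gives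
`D_S(a) = ∑_k D_S(a - e_k) ∏_{j ≠ k} x_j`, so the coefficients satisfy the recursion
`M_S(a) = ∑_k M_S(a - e_k)` of the multinomial coefficients.

If `a_k = 0`, the variable `x_k` occurs only in the factor `∏_{i ≠ k} (x_k - x_i) ^ a_i`, whose
`x_k`-degree `∑_{i ≠ k} a_i` is exactly the exponent of `x_k` in the target monomial; so only the
leading term `x_k ^ ∑ a_i` contributes, and `k` can be dropped from `S`.
-/

open MvPolynomial Finset

lemma Finset.sum_sub_pi_single_add_one {α : Type*} [DecidableEq α] {s : Finset α} {f : α → ℕ}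
    {k : α} (hk : k ∈ s) (hfk : f k ≠ 0) :
    ∑ i ∈ s, (f - Pi.single k 1 : α → ℕ) i + 1 = ∑ i ∈ s, f i := by
  rw [← add_sum_erase s _ hk, ← add_sum_erase s f hk,
    sum_congr rfl fun i hi => (by simp [ne_of_mem_erase hi] : (f - Pi.single k 1 : α → ℕ) i = f i),
    Pi.sub_apply, Pi.single_eq_same, add_right_comm,
    Nat.sub_add_cancel (Nat.one_le_iff_ne_zero.mpr hfk)]

open Nat in
lemma Nat.multinomial_eq_sum_sub_pi_single {α : Type*} [DecidableEq α] {s : Finset α}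
    {f : α → ℕ} (hs : s.Nonempty) (hf : ∀ i ∈ s, f i ≠ 0) :
    multinomial s f = ∑ k ∈ s, multinomial s (f - Pi.single k 1) := by
  have hprod : ∀ k ∈ s, f k * ∏ i ∈ s, ((f - Pi.single k 1 : α → ℕ) i)! = ∏ i ∈ s, (f i)! := by
    intro k hk
    rw [← mul_prod_erase s _ hk, ← mul_prod_erase s (fun i => (f i)!) hk, ← mul_assoc,
      Pi.sub_apply, Pi.single_eq_same, Nat.mul_factorial_pred (hf k hk)]
    congr 1
    exact prod_congr rfl fun i hi => by simp [ne_of_mem_erase hi]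
  have hsum_ne : ∑ i ∈ s, f i ≠ 0 := by
    obtain ⟨k, hk⟩ := hs
    exact fun h => hf k hk (sum_eq_zero_iff.mp h k hk)
  refine Nat.eq_of_mul_eq_mul_left (prod_pos (s := s) fun i _ => (f i).factorial_pos) ?_
  rw [multinomial_spec, mul_sum]
  calc (∑ i ∈ s, f i)! = ∑ k ∈ s, f k * (∑ i ∈ s, f i - 1)! := by
        rw [← sum_mul, Nat.mul_factorial_pred hsum_ne]
    _ = _ := sum_congr rfl fun k hk => by
        rw [← hprod k hk, mul_assoc, multinomial_spec,
          Nat.eq_sub_of_add_eq (sum_sub_pi_single_add_one hk (hf k hk))]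

lemma Lagrange.sum_prod_div_sub_eq_one {ι F : Type*} [Field F] [DecidableEq ι] {s : Finset ι}
    {v : ι → F} (hv : Set.InjOn v s) (hs : s.Nonempty) :
    ∑ k ∈ s, ∏ j ∈ s.erase k, v j / (v j - v k) = 1 := by
  have h := congrArg (Polynomial.eval 0) (Lagrange.sum_basis hv hs)
  rw [Polynomial.eval_finsetSum, Polynomial.eval_one] at h
  rw [← h]
  refine sum_congr rfl fun k _ => ?_
  rw [Lagrange.basis, Polynomial.eval_prod]
  refine prod_congr rfl fun j _ => ?_
  simp only [Lagrange.basisDivisor, Polynomial.eval_mul, Polynomial.eval_C, Polynomial.eval_sub,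
    Polynomial.eval_X]
  rw [div_eq_mul_inv, ← neg_sub (v j) (v k), inv_neg]
  ring

lemma Finset.prod_prod_Ioi_mul_eq_prod_prod_erase {ι M : Type*} [CommMonoid M] [Fintype ι]
    [LinearOrder ι] [LocallyFiniteOrderTop ι] [LocallyFiniteOrderBot ι] (f : ι → ι → M) :
    ∏ i, ∏ j ∈ Ioi i, f i j * f j i = ∏ i, ∏ j ∈ univ.erase i, f i j := by
  have hsplit : ∀ i, ∏ j ∈ univ.erase i, f i j = (∏ j ∈ Ioi i, f i j) * ∏ j ∈ Iio i, f i j := by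
    intro i
    rw [← prod_filter_mul_prod_filter_not (univ.erase i) (i < ·)]
    congr 2 <;> ext j <;> simp only [mem_filter, mem_erase, mem_univ, mem_Ioi, mem_Iio] <;> grind
  have hswap : ∏ i, ∏ j ∈ Ioi i, f j i = ∏ i, ∏ j ∈ Iio i, f i j :=
    prod_comm' fun i j => by simp
  simp only [prod_mul_distrib, hswap, hsplit]

namespace MvPolynomial

variable {σ R : Type*} [CommRing R]

lemma degreeOf_X_le (k j : σ) : degreeOf k (X j : MvPolynomial σ R) ≤ 1 := by
  classical
  refine degreeOf_le_iff.mpr fun m hm => ?_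
  rw [mem_singleton.mp (support_monomial_subset hm), Finsupp.single_apply]
  split_ifs <;> omega

lemma degreeOf_X_sub_X_le (k i : σ) : degreeOf k (X k - X i : MvPolynomial σ R) ≤ 1 :=
  (degreeOf_sub_le k _ _).trans (max_le (degreeOf_X_le k k) (degreeOf_X_le k i))

lemma degreeOf_mul_X_sub_X_pow_le {k : σ} (i : σ) {p : MvPolynomial σ R} {d : ℕ}
    (hp : degreeOf k p ≤ d) (b : ℕ) : degreeOf k (p * (X k - X i) ^ b) ≤ d + b := by
  refine (degreeOf_mul_le k _ _).trans (add_le_add hp ((degreeOf_pow_le k _ b).trans ?_))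
  simpa using Nat.mul_le_mul_left b (degreeOf_X_sub_X_le (R := R) k i)

lemma coeff_add_sum_single_mul_prod_X (T : Finset σ) (p : MvPolynomial σ R) (m : σ →₀ ℕ) :
    coeff (m + ∑ j ∈ T, Finsupp.single j 1) (p * ∏ j ∈ T, X j) = coeff m p := by
  have hmono : (∏ j ∈ T, X j : MvPolynomial σ R) = monomial (∑ j ∈ T, Finsupp.single j 1) 1 :=
    (monomial_sum_one T _).symm
  rw [hmono, coeff_mul_monomial, mul_one]

variable [DecidableEq σ]

lemma coeff_add_single_mul_X_sub_X {k i : σ} (hik : i ≠ k) {p : MvPolynomial σ R} {d : ℕ}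
    (hp : degreeOf k p ≤ d) (m : σ →₀ ℕ) :
    coeff (m + Finsupp.single k (d + 1)) (p * (X k - X i)) =
      coeff (m + Finsupp.single k d) p := by
  have hvanish : coeff (m + Finsupp.single k (d + 1)) (p * X i) = 0 := by
    rw [coeff_mul_X']
    split_ifs
    · refine notMem_support_iff.mp fun hmem => ?_
      have := monomial_le_degreeOf k hmem
      simp [hik] at this
      omega
    · rfl
  rw [mul_sub, coeff_sub, hvanish, sub_zero, Finsupp.single_add, ← add_assoc, coeff_mul_X]

lemma coeff_add_single_mul_X_sub_X_pow {k i : σ} (hik : i ≠ k) (b : ℕ) {p : MvPolynomial σ R}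
    {d : ℕ} (hp : degreeOf k p ≤ d) (m : σ →₀ ℕ) :
    coeff (m + Finsupp.single k (d + b)) (p * (X k - X i) ^ b) =
      coeff (m + Finsupp.single k d) p := by
  induction b generalizing p d with
  | zero => simp
  | succ b ih =>
    have hp' : degreeOf k (p * (X k - X i)) ≤ d + 1 := by
      simpa using degreeOf_mul_X_sub_X_pow_le i hp 1
    rw [pow_succ', ← mul_assoc, ← add_comm 1, ← add_assoc, ih hp',
      coeff_add_single_mul_X_sub_X hik hp]

lemma coeff_add_single_mul_prod_X_sub_X_pow {k : σ} {T : Finset σ} (hk : k ∉ T) (b : σ → ℕ)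
    {p : MvPolynomial σ R} {d : ℕ} (hp : degreeOf k p ≤ d) (m : σ →₀ ℕ) :
    coeff (m + Finsupp.single k (d + ∑ i ∈ T, b i)) (p * ∏ i ∈ T, (X k - X i) ^ b i) =
      coeff (m + Finsupp.single k d) p := by
  induction T using Finset.cons_induction generalizing p d with
  | empty => simp
  | cons i T hi ih =>
    rw [mem_cons, not_or] at hk
    rw [prod_cons, sum_cons, ← mul_assoc, ← add_assoc,
      ih hk.2 (degreeOf_mul_X_sub_X_pow_le i hp (b i)),
      coeff_add_single_mul_X_sub_X_pow (Ne.symm hk.1) _ hp]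

end MvPolynomial

section Dyson

variable {σ R : Type*} [CommRing R] [DecidableEq σ]

noncomputable def dysonProduct (S : Finset σ) (a : σ → ℕ) : MvPolynomial σ R :=
  ∏ i ∈ S, ∏ j ∈ S.erase i, (X j - X i) ^ a i

noncomputable def dysonExponent (S : Finset σ) (a : σ → ℕ) : σ →₀ ℕ :=
  ∑ i ∈ S, Finsupp.single i (∑ j ∈ S.erase i, a j)

lemma dysonExponent_apply (S : Finset σ) (a : σ → ℕ) (i : σ) :
    dysonExponent S a i = if i ∈ S then ∑ j ∈ S.erase i, a j else 0 := by
  simp [dysonExponent, Finsupp.finsetSum_apply, Finsupp.single_apply]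

lemma dysonExponent_eq_add {S : Finset σ} {a : σ → ℕ} {k : σ} (hk : k ∈ S) (hak : a k ≠ 0) :
    dysonExponent S a =
      dysonExponent S (a - Pi.single k 1) + ∑ j ∈ S.erase k, Finsupp.single j 1 := by
  ext i
  rw [Finsupp.add_apply, dysonExponent_apply, dysonExponent_apply, Finsupp.finsetSum_apply]
  simp only [Finsupp.single_apply, sum_ite_eq', mem_erase]
  by_cases hi : i ∈ S
  · by_cases hik : i = k
    · subst hik
      simp only [hi, if_true, ne_eq, not_true_eq_false, false_and, if_false, add_zero]
      exact sum_congr rfl fun j hj => by simp [ne_of_mem_erase hj]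
    · simp only [hi, hik, if_true, ne_eq, not_false_eq_true, and_self]
      exact (sum_sub_pi_single_add_one (mem_erase.mpr ⟨Ne.symm hik, hk⟩) hak).symm
  · simp [hi]

lemma dysonExponent_of_eq_zero {S : Finset σ} {a : σ → ℕ} {k : σ} (hk : k ∈ S) (hak : a k = 0) :
    dysonExponent S a =
      dysonExponent (S.erase k) a + Finsupp.single k (∑ i ∈ S.erase k, a i) := by
  ext i
  rw [Finsupp.add_apply, dysonExponent_apply, dysonExponent_apply, Finsupp.single_apply]
  by_cases hik : i = k
  · subst hik
    simp [hk]
  · by_cases hi : i ∈ S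
    · rw [if_pos hi, if_pos (mem_erase.mpr ⟨hik, hi⟩), if_neg (Ne.symm hik), add_zero,
        erase_right_comm, sum_erase _ hak]
    · simp [hi, Ne.symm hik]

lemma dysonProduct_add_single (S : Finset σ) (a : σ → ℕ) {k : σ} (hk : k ∈ S) :
    (dysonProduct S (a + Pi.single k 1) : MvPolynomial σ R) =
      dysonProduct S a * ∏ j ∈ S.erase k, (X j - X k) := by
  have hrest : ∀ i ∈ S.erase k, (a + Pi.single k 1 : σ → ℕ) i = a i := fun i hi => by
    simp [ne_of_mem_erase hi]
  calc (dysonProduct S (a + Pi.single k 1) : MvPolynomial σ R)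
      = (∏ j ∈ S.erase k, (X j - X k) ^ (a k + 1)) *
          ∏ i ∈ S.erase k, ∏ j ∈ S.erase i, (X j - X i) ^ a i := by
        rw [dysonProduct, ← mul_prod_erase S _ hk]
        congr 1
        · simp
        · exact prod_congr rfl fun i hi => by rw [hrest i hi]
    _ = dysonProduct S a * ∏ j ∈ S.erase k, (X j - X k) := by
        rw [dysonProduct, ← mul_prod_erase S _ hk]
        simp only [pow_succ, prod_mul_distrib]
        ring

lemma dysonProduct_of_eq_zero {S : Finset σ} {a : σ → ℕ} {k : σ} (hk : k ∈ S) (hak : a k = 0) :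
    (dysonProduct S a : MvPolynomial σ R) =
      dysonProduct (S.erase k) a * ∏ i ∈ S.erase k, (X k - X i) ^ a i := by
  rw [dysonProduct, ← mul_prod_erase S _ hk, hak]
  simp only [pow_zero, prod_const_one, one_mul, dysonProduct, ← prod_mul_distrib]
  refine prod_congr rfl fun i hi => ?_
  rw [← mul_prod_erase _ _ (mem_erase.mpr ⟨(ne_of_mem_erase hi).symm, hk⟩), erase_right_comm,
    mul_comm]

lemma degreeOf_dysonProduct {S : Finset σ} {k : σ} (hk : k ∉ S) (a : σ → ℕ) :
    degreeOf k (dysonProduct S a : MvPolynomial σ R) = 0 := by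
  have hfactor : ∀ i ∈ S, ∀ j ∈ S, degreeOf k ((X j - X i : MvPolynomial σ R) ^ a i) = 0 := by
    intro i hi j hj
    have hsub : degreeOf k (X j - X i : MvPolynomial σ R) = 0 := by
      simpa [degreeOf_X_of_ne (ne_of_mem_of_not_mem hi hk).symm,
        degreeOf_X_of_ne (ne_of_mem_of_not_mem hj hk).symm] using
        degreeOf_sub_le (R := R) k (X j) (X i)
    exact Nat.eq_zero_of_le_zero <| (degreeOf_pow_le _ _ _).trans_eq (by rw [hsub, mul_zero])
  refine Nat.eq_zero_of_le_zero ?_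
  calc degreeOf k (dysonProduct S a : MvPolynomial σ R)
      ≤ ∑ i ∈ S, ∑ j ∈ S.erase i, degreeOf k ((X j - X i : MvPolynomial σ R) ^ a i) :=
        (degreeOf_prod_le _ _ _).trans (sum_le_sum fun i _ => degreeOf_prod_le _ _ _)
    _ = 0 := sum_eq_zero fun i hi => sum_eq_zero fun j hj => hfactor i hi j (mem_of_mem_erase hj)

lemma dysonProduct_eq_sum [IsDomain R] {S : Finset σ} (hS : S.Nonempty) {a : σ → ℕ}
    (ha : ∀ i ∈ S, a i ≠ 0) :
    (dysonProduct S a : MvPolynomial σ R) =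
      ∑ k ∈ S, dysonProduct S (a - Pi.single k 1) * ∏ j ∈ S.erase k, X j := by
  let φ := algebraMap (MvPolynomial σ R) (FractionRing (MvPolynomial σ R))
  have hφ : Set.InjOn (fun j => φ (X j)) S := fun i _ j _ h =>
    X_injective (IsFractionRing.injective _ _ h)
  have hne : ∀ k ∈ S, ∀ j ∈ S.erase k, φ (X j) - φ (X k) ≠ 0 := fun k hk j hj =>
    sub_ne_zero.mpr fun h => ne_of_mem_erase hj (hφ (mem_of_mem_erase hj) hk h)
  have hterm : ∀ k ∈ S, φ (dysonProduct S (a - Pi.single k 1) * ∏ j ∈ S.erase k, X j) =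
      φ (dysonProduct S a) * ∏ j ∈ S.erase k, φ (X j) / (φ (X j) - φ (X k)) := fun k hk => by
    have hsplit : a = a - Pi.single k 1 + Pi.single k 1 := funext fun i => by
      by_cases hi : i = k
      · subst hi
        simpa using (Nat.succ_pred_eq_of_ne_zero (ha i hk)).symm
      · simp [hi]
    have hcancel : φ (∏ j ∈ S.erase k, (X j - X k)) *
        ∏ j ∈ S.erase k, φ (X j) / (φ (X j) - φ (X k)) = φ (∏ j ∈ S.erase k, X j) := by
      simp only [map_prod, map_sub, ← prod_mul_distrib]
      exact prod_congr rfl fun j hj => mul_div_cancel₀ _ (hne k hk j hj)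
    conv_rhs => rw [hsplit]
    rw [dysonProduct_add_single _ _ hk, map_mul, map_mul, mul_assoc, hcancel]
  refine IsFractionRing.injective _ (FractionRing (MvPolynomial σ R)) ?_
  rw [map_sum, sum_congr rfl hterm, ← mul_sum, Lagrange.sum_prod_div_sub_eq_one hφ hS, mul_one]

theorem coeff_dysonExponent_dysonProduct [IsDomain R] (S : Finset σ) (a : σ → ℕ) :
    coeff (dysonExponent S a) (dysonProduct S a : MvPolynomial σ R) = Nat.multinomial S a := by
  by_cases hzero : ∃ k ∈ S, a k = 0
  · obtain ⟨k, hk, hak⟩ := hzero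
    have hk' : k ∉ S.erase k := notMem_erase k S
    have hmult : Nat.multinomial S a = Nat.multinomial (S.erase k) a := by
      conv_lhs => rw [← insert_erase hk]
      rw [Nat.multinomial_insert hk', hak]
      simp
    have hleading := coeff_add_single_mul_prod_X_sub_X_pow (R := R) hk' a
      (degreeOf_dysonProduct hk' a).le (dysonExponent (S.erase k) a)
    rw [zero_add, Finsupp.single_zero, add_zero] at hleading
    rw [dysonExponent_of_eq_zero hk hak, dysonProduct_of_eq_zero hk hak, hleading,
      coeff_dysonExponent_dysonProduct (S.erase k) a, hmult]
  · have hpos : ∀ i ∈ S, a i ≠ 0 := fun i hi h => hzero ⟨i, hi, h⟩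
    rcases S.eq_empty_or_nonempty with rfl | hS
    · simp [dysonProduct, dysonExponent]
    rw [dysonProduct_eq_sum hS hpos, coeff_sum, Nat.multinomial_eq_sum_sub_pi_single hS hpos,
      Nat.cast_sum]
    refine sum_congr rfl fun k hk => ?_
    rw [dysonExponent_eq_add hk (hpos k hk), coeff_add_sum_single_mul_prod_X,
      coeff_dysonExponent_dysonProduct S (a - Pi.single k 1)]
termination_by S.card + ∑ i ∈ S, a i
decreasing_by
  · have := card_erase_lt_of_mem hk
    rw [sum_erase _ hak]
    omega
  · have := sum_sub_pi_single_add_one hk (hpos k hk)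
    omega

end Dyson

theorem dyson_conjecture_general (n : ℕ) (a : Fin n → ℕ) :
    MvPolynomial.coeff
        (Finsupp.equivFunOnFinite.symm (fun i => (∑ j, a j) - a i))
        (∏ i : Fin n, ∏ j ∈ Finset.Ioi i,
          ((-1) ^ (a j) * (MvPolynomial.X j - MvPolynomial.X i) ^ (a i + a j) :
            MvPolynomial (Fin n) ℤ)) =
      (((∑ i, a i).factorial / ∏ i, (a i).factorial : ℕ) : ℤ) := by
  have hprod : ∏ i : Fin n, ∏ j ∈ Ioi i,
      ((-1) ^ (a j) * (X j - X i) ^ (a i + a j) : MvPolynomial (Fin n) ℤ) =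
        dysonProduct univ a := by
    rw [dysonProduct, ← prod_prod_Ioi_mul_eq_prod_prod_erase]
    refine prod_congr rfl fun i _ => prod_congr rfl fun j _ => ?_
    rw [pow_add, ← neg_sub (X j) (X i), neg_pow (X j - X i)]
    ring
  have hexp : Finsupp.equivFunOnFinite.symm (fun i => ∑ j, a j - a i) = dysonExponent univ a := by
    ext i
    rw [Finsupp.coe_equivFunOnFinite_symm, dysonExponent_apply, if_pos (mem_univ i),
      ← add_sum_erase univ a (mem_univ i), add_tsub_cancel_left]
  rw [hprod, hexp, coeff_dysonExponent_dysonProduct]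
  rfl

/-- Dyson's conjecture. -/
theorem dyson_conjecture (n : ℕ) (a : Fin n → ℕ) (ha : ∀ i, 0 < a i) :
    MvPolynomial.coeff
        (Finsupp.equivFunOnFinite.symm (fun i => (∑ j, a j) - a i))
        (∏ i : Fin n, ∏ j ∈ Finset.Ioi i,
          ((-1) ^ (a j) * (MvPolynomial.X j - MvPolynomial.X i) ^ (a i + a j) :
            MvPolynomial (Fin n) ℤ)) =
      (((∑ i, a i).factorial / ∏ i, (a i).factorial : ℕ) : ℤ) :=
  dyson_conjecture_general n a
end

section
/- For every positive integer m, the coefficient of the monomial x_1^{2m-2} x_2^{2m-2} ⋯ x_m^{2m-2} in the integer polynomial ∏_{1 ≤ i < j ≤ m} (x_i - x_j)^4 equals (2m)! / 2^m. -/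
/-!
Good's proof of Dyson's constant term identity. Clearing denominators, the constant term of
`∏_{i ≠ j} (1 - x_i / x_j) ^ a_i` is the coefficient `Dyson.constTerm a` of
`∏_j x_j ^ (∑_{k ≠ j} a_k)` in `∏_k ∏_{j ≠ k} (x_j - x_k) ^ a_k`. Lagrange interpolation of the
constant `1` at the nodes `x_i`, evaluated at `0`, gives `∑_i ∏_{j ≠ i} x_j / (x_j - x_i) = 1`,
which turns into the recurrence `constTerm a = ∑_i constTerm (a - e_i)` when every `a_i > 0`.
If `a_i = 0`, the variable `x_i` only occurs in `∏_k (x_i - x_k) ^ a_k`, which is monic of degree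
`∑_k a_k` in `x_i`, so `x_i` can be dropped. The multinomial coefficient satisfies the same
recurrence and boundary conditions. For `a = (2, …, 2)` the product is `∏_{i < j} (x_i - x_j) ^ 4`.
-/

open Finset MvPolynomial Nat

theorem Lagrange.sum_prod_erase_div_sub_eq_one {K ι : Type*} [Field K] [Fintype ι]
    [DecidableEq ι] [Nonempty ι] {y : ι → K} (hy : Function.Injective y) :
    ∑ i, ∏ j ∈ univ.erase i, y j / (y j - y i) = 1 := by
  have h := congrArg (Polynomial.eval 0) (Lagrange.sum_basis hy.injOn univ_nonempty)
  simp only [Polynomial.eval_finsetSum, Lagrange.basis, Polynomial.eval_prod,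
    Lagrange.basisDivisor, Polynomial.eval_mul, Polynomial.eval_C, Polynomial.eval_sub,
    Polynomial.eval_X, Polynomial.eval_one, zero_sub] at h
  rw [← h]
  refine sum_congr rfl fun i _ => prod_congr rfl fun j _ => ?_
  rw [div_eq_mul_inv, ← neg_sub, inv_neg]
  ring

theorem Lagrange.prod_prod_erase_sub_eq_sum {K ι : Type*} [Field K] [Fintype ι]
    [DecidableEq ι] [Nonempty ι] {y : ι → K} (hy : Function.Injective y) :
    ∏ k, ∏ j ∈ univ.erase k, (y j - y k) =
      ∑ i, (∏ j ∈ univ.erase i, y j) * ∏ k ∈ univ.erase i, ∏ j ∈ univ.erase k, (y j - y k) := by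
  set r : ι → K := fun k => ∏ j ∈ univ.erase k, (y j - y k)
  have hr (k : ι) : r k ≠ 0 :=
    prod_ne_zero_iff.mpr fun j hj => sub_ne_zero_of_ne <| hy.ne (mem_erase.mp hj).1
  calc ∏ k, r k = (∑ i, ∏ j ∈ univ.erase i, y j / (y j - y i)) * ∏ k, r k := by
        rw [sum_prod_erase_div_sub_eq_one hy, one_mul]
    _ = _ := by
        rw [sum_mul]
        refine sum_congr rfl fun i _ => ?_
        rw [prod_div_distrib, ← mul_prod_erase univ r (mem_univ i)]
        change _ / r i * _ = _
        field_simp [hr i]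

@[to_additive]
theorem Fin.prod_univ_erase_zero {M : Type*} [CommMonoid M] {n : ℕ} (f : Fin (n + 1) → M) :
    ∏ j ∈ univ.erase 0, f j = ∏ j : Fin n, f j.succ := by
  rw [Fin.univ_succ, erase_cons, prod_map]
  rfl

@[to_additive]
theorem Fin.prod_univ_erase_succ {M : Type*} [CommMonoid M] {n : ℕ} (f : Fin (n + 1) → M)
    (k : Fin n) : ∏ j ∈ univ.erase k.succ, f j = f 0 * ∏ j ∈ univ.erase k, f j.succ := by
  have h := prod_map (univ.erase k) ⟨Fin.succ, Fin.succ_injective n⟩ f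
  rw [map_erase] at h
  rw [Fin.univ_succ, erase_cons_of_ne _ (Fin.succ_ne_zero k).symm, Finset.prod_cons]
  exact congrArg _ h

theorem MvPolynomial.finSuccEquiv_rename_succ {R : Type*} [CommRing R] {n : ℕ}
    (p : MvPolynomial (Fin n) R) : finSuccEquiv R n (rename Fin.succ p) = Polynomial.C p :=
  AlgHom.congr_fun (φ₁ := (finSuccEquiv R n).toAlgHom.comp (rename Fin.succ))
    (φ₂ := Polynomial.CAlgHom) (algHom_ext fun i => by simp [finSuccEquiv_X_succ]) p

theorem Finset.sum_update_sub_one {ι : Type*} [DecidableEq ι] {s : Finset ι} {a : ι → ℕ}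
    {i : ι} (hi : i ∈ s) (hai : a i ≠ 0) :
    ∑ j ∈ s, Function.update a i (a i - 1) j = ∑ j ∈ s, a j - 1 := by
  rw [sum_update_of_mem hi, sdiff_singleton_eq_erase, ← add_sum_erase s a hi]
  omega

theorem Nat.multinomial_eq_sum_update {ι : Type*} [DecidableEq ι] {s : Finset ι}
    (hs : s.Nonempty) {a : ι → ℕ} (ha : ∀ i ∈ s, a i ≠ 0) :
    Nat.multinomial s a = ∑ i ∈ s, Nat.multinomial s (Function.update a i (a i - 1)) := by
  have hprod (i) (hi : i ∈ s) :
      ∏ j ∈ s, (a j)! = a i * ∏ j ∈ s, (Function.update a i (a i - 1) j)! := by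
    rw [← mul_prod_erase s _ hi,
      ← mul_prod_erase s (fun j => (Function.update a i (a i - 1) j)!) hi,
      Function.update_self, ← mul_assoc, mul_factorial_pred (ha i hi)]
    exact congrArg _ <| prod_congr rfl fun j hj => by
      rw [Function.update_of_ne (mem_erase.mp hj).1]
  obtain ⟨i₀, hi₀⟩ := hs
  have hsum : ∑ i ∈ s, a i ≠ 0 := fun h => ha i₀ hi₀ (sum_eq_zero_iff.mp h i₀ hi₀)
  apply Nat.eq_of_mul_eq_mul_left (prod_pos fun j _ => factorial_pos (a j))
  rw [multinomial_spec, mul_sum]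
  calc (∑ i ∈ s, a i)! = (∑ i ∈ s, a i) * (∑ i ∈ s, a i - 1)! :=
        (mul_factorial_pred hsum).symm
    _ = ∑ i ∈ s, a i * (∑ i ∈ s, a i - 1)! := sum_mul ..
    _ = _ := sum_congr rfl fun i hi => by
        rw [hprod i hi, mul_assoc, multinomial_spec, sum_update_sub_one hi (ha i hi)]

theorem Nat.multinomial_comp_equiv {σ τ : Type*} [Fintype σ] [Fintype τ] (e : σ ≃ τ)
    (a : τ → ℕ) : Nat.multinomial univ (a ∘ e) = Nat.multinomial univ a := by
  simp only [Nat.multinomial, Function.comp_apply, e.sum_comp a, e.prod_comp fun i => (a i)!]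

theorem Nat.multinomial_univ_of_apply_zero {n : ℕ} {a : Fin (n + 1) → ℕ} (h0 : a 0 = 0) :
    Nat.multinomial univ a = Nat.multinomial univ (Fin.tail a) := by
  simp [Nat.multinomial, Fin.sum_univ_succ, Fin.prod_univ_succ, h0, Fin.tail]

namespace Dyson

variable {σ τ R : Type*} [Fintype σ] [DecidableEq σ] [Fintype τ] [DecidableEq τ] [CommRing R]

noncomputable def diffProd (k : σ) : MvPolynomial σ R := ∏ j ∈ univ.erase k, (X j - X k)

noncomputable def poly (a : σ → ℕ) : MvPolynomial σ R := ∏ k, diffProd k ^ a k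

noncomputable def exponent (a : σ → ℕ) : σ →₀ ℕ :=
  Finsupp.equivFunOnFinite.symm fun j => ∑ k ∈ univ.erase j, a k

theorem exponent_apply (a : σ → ℕ) (j : σ) : exponent a j = ∑ k ∈ univ.erase j, a k := rfl

variable (R) in
noncomputable def constTerm (a : σ → ℕ) : R := coeff (exponent a) (poly a)

theorem prod_diffProd_eq_sum [IsDomain R] [Nonempty σ] :
    ∏ k, (diffProd k : MvPolynomial σ R) =
      ∑ i, (∏ j ∈ univ.erase i, X j) * ∏ k ∈ univ.erase i, diffProd k := by
  have hinj := IsFractionRing.injective (MvPolynomial σ R) (FractionRing (MvPolynomial σ R))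
  apply hinj
  simpa only [diffProd, map_prod, map_sum, map_mul, map_sub, Function.comp_apply] using
    Lagrange.prod_prod_erase_sub_eq_sum (hinj.comp X_injective)

theorem poly_eq_sum [IsDomain R] [Nonempty σ] {a : σ → ℕ} (ha : ∀ i, a i ≠ 0) :
    (poly a : MvPolynomial σ R) =
      ∑ i, (∏ j ∈ univ.erase i, X j) * poly (Function.update a i (a i - 1)) := by
  have hpow (k : σ) :
      (diffProd k : MvPolynomial σ R) ^ a k = diffProd k ^ (a k - 1) * diffProd k := by
    rw [← pow_succ, Nat.sub_add_cancel (one_le_iff_ne_zero.mpr (ha k))]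
  have hupdate (i : σ) : (poly (Function.update a i (a i - 1)) : MvPolynomial σ R) =
      (∏ k, diffProd k ^ (a k - 1)) * ∏ k ∈ univ.erase i, diffProd k := by
    rw [poly, ← mul_prod_erase univ _ (mem_univ i),
      ← mul_prod_erase univ (fun k => _ ^ (a k - 1)) (mem_univ i), Function.update_self,
      mul_assoc, ← prod_mul_distrib]
    refine congrArg _ <| prod_congr rfl fun k hk => ?_
    rw [Function.update_of_ne (mem_erase.mp hk).1, hpow k]
  calc (poly a : MvPolynomial σ R) = (∏ k, diffProd k ^ (a k - 1)) * ∏ k, diffProd k := by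
        rw [poly, ← prod_mul_distrib]
        exact prod_congr rfl fun k _ => hpow k
    _ = _ := by
        rw [prod_diffProd_eq_sum, mul_sum]
        exact sum_congr rfl fun i _ => by rw [hupdate i, mul_left_comm]

theorem exponent_eq_sum_single_add {a : σ → ℕ} {i : σ} (hi : a i ≠ 0) :
    exponent a = (∑ j ∈ univ.erase i, Finsupp.single j 1) +
      exponent (Function.update a i (a i - 1)) := by
  ext j
  simp only [exponent_apply, Finsupp.add_apply, Finsupp.finsetSum_apply, Finsupp.single_apply,
    sum_ite_eq', mem_erase, mem_univ, and_true]
  rcases eq_or_ne j i with rfl | hji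
  · rw [if_neg (not_not.mpr rfl), zero_add]
    exact sum_congr rfl fun k hk => (Function.update_of_ne (mem_erase.mp hk).1 _ _).symm
  · have hmem : i ∈ univ.erase j := mem_erase.mpr ⟨hji.symm, mem_univ i⟩
    rw [if_pos hji, sum_update_of_mem hmem, sdiff_singleton_eq_erase, ← add_sum_erase _ _ hmem]
    omega

theorem constTerm_eq_sum [IsDomain R] [Nonempty σ] {a : σ → ℕ} (ha : ∀ i, a i ≠ 0) :
    constTerm R a = ∑ i, constTerm R (Function.update a i (a i - 1)) := by
  rw [constTerm, poly_eq_sum ha, coeff_sum]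
  refine sum_congr rfl fun i _ => ?_
  have hX : (∏ j ∈ univ.erase i, X j : MvPolynomial σ R) =
      monomial (∑ j ∈ univ.erase i, Finsupp.single j 1) 1 := (monomial_sum_one _ _).symm
  rw [hX, exponent_eq_sum_single_add (ha i), coeff_monomial_mul, one_mul, constTerm]

theorem rename_diffProd (e : σ ≃ τ) (k : σ) :
    rename e (diffProd k : MvPolynomial σ R) = diffProd (e k) := by
  rw [diffProd, map_prod, diffProd]
  exact prod_equiv e (by simp) (by simp)

theorem rename_poly_comp (e : σ ≃ τ) (a : τ → ℕ) :
    rename e (poly (a ∘ e) : MvPolynomial σ R) = poly a := by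
  rw [poly, map_prod, poly]
  exact Fintype.prod_equiv e _ _ fun k => by rw [map_pow, rename_diffProd, Function.comp_apply]

theorem mapDomain_exponent_comp (e : σ ≃ τ) (a : τ → ℕ) :
    Finsupp.mapDomain e (exponent (a ∘ e)) = exponent a := by
  ext j
  obtain ⟨i, rfl⟩ := e.surjective j
  rw [Finsupp.mapDomain_apply e.injective, exponent_apply, exponent_apply]
  exact sum_equiv e (by simp) (by simp)

theorem constTerm_comp_equiv (e : σ ≃ τ) (a : τ → ℕ) :
    constTerm R (a ∘ e) = constTerm R a := by
  rw [constTerm, constTerm, ← rename_poly_comp e, ← mapDomain_exponent_comp e,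
    coeff_rename_mapDomain _ e.injective]

section Fin

variable {n : ℕ}

theorem poly_const_two_mul (c : ℕ) :
    (poly (fun _ => 2 * c) : MvPolynomial (Fin n) R) =
      ∏ i, ∏ j ∈ Ioi i, (X i - X j) ^ (4 * c) := by
  simp_rw [poly, diffProd, ← prod_pow, ← compl_singleton]
  rw [← prod_prod_Ioi_mul_eq_prod_prod_off_diag
    fun j i => (X j - X i : MvPolynomial (Fin n) R) ^ (2 * c)]
  refine prod_congr rfl fun i _ => prod_congr rfl fun j _ => ?_
  rw [← neg_sub (X i), pow_mul, neg_sq, ← pow_mul]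
  ring

theorem diffProd_succ (k : Fin n) :
    (diffProd k.succ : MvPolynomial (Fin (n + 1)) R) =
      (X 0 - X k.succ) * rename Fin.succ (diffProd k) := by
  rw [diffProd, Fin.prod_univ_erase_succ, diffProd, map_prod]
  simp only [map_sub, rename_X]

theorem poly_eq_of_apply_zero {a : Fin (n + 1) → ℕ} (h0 : a 0 = 0) :
    (poly a : MvPolynomial (Fin (n + 1)) R) =
      (∏ k, (X 0 - X k.succ) ^ Fin.tail a k) * rename Fin.succ (poly (Fin.tail a)) := by
  rw [poly, Fin.prod_univ_succ, h0, pow_zero, one_mul, poly, map_prod]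
  simp only [diffProd_succ, mul_pow, prod_mul_distrib, map_pow, Fin.tail]

theorem constTerm_eq_constTerm_tail [Nontrivial R] {a : Fin (n + 1) → ℕ} (h0 : a 0 = 0) :
    constTerm R a = constTerm R (Fin.tail a) := by
  set F : Polynomial (MvPolynomial (Fin n) R) :=
    ∏ k, (Polynomial.X - Polynomial.C (X k)) ^ Fin.tail a k
  have hmonic (k : Fin n) :
      ((Polynomial.X - Polynomial.C (X k) : Polynomial (MvPolynomial (Fin n) R)) ^
        Fin.tail a k).Monic :=
    (Polynomial.monic_X_sub_C _).pow _
  have hF : F.Monic := Polynomial.monic_prod_of_monic _ _ fun k _ => hmonic k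
  have hdeg : F.natDegree = ∑ k, Fin.tail a k := by
    rw [Polynomial.natDegree_prod_of_monic _ _ fun k _ => hmonic k]
    simp [(Polynomial.monic_X_sub_C _).natDegree_pow]
  have hpoly : finSuccEquiv R n (poly a) = F * Polynomial.C (poly (Fin.tail a)) := by
    rw [poly_eq_of_apply_zero h0, map_mul, map_prod, finSuccEquiv_rename_succ]
    simp [F, finSuccEquiv_X_zero, finSuccEquiv_X_succ]
  have hexp : exponent a = Finsupp.cons (∑ k, Fin.tail a k) (exponent (Fin.tail a)) := by
    ext j
    cases j using Fin.cases <;>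
      simp [exponent_apply, Fin.sum_univ_erase_zero, Fin.sum_univ_erase_succ, h0, Fin.tail]
  rw [constTerm, hexp, ← finSuccEquiv_coeff_coeff, hpoly, Polynomial.coeff_mul_C, ← hdeg,
    hF.coeff_natDegree, one_mul, constTerm]

theorem constTerm_eq_multinomial [IsDomain R] :
    ∀ {n : ℕ} (a : Fin n → ℕ), constTerm R a = Nat.multinomial univ a
  | 0, a => by simp [constTerm, poly, Subsingleton.elim (exponent a) 0]
  | n + 1, a => by
    by_cases hzero : ∃ i, a i = 0
    · obtain ⟨i, hi⟩ := hzero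
      have h0 : (a ∘ Equiv.swap 0 i) 0 = 0 := by simpa using hi
      rw [← constTerm_comp_equiv (Equiv.swap 0 i), constTerm_eq_constTerm_tail h0,
        constTerm_eq_multinomial, ← Nat.multinomial_univ_of_apply_zero h0,
        Nat.multinomial_comp_equiv]
    · push Not at hzero
      rw [constTerm_eq_sum hzero, Nat.multinomial_eq_sum_update univ_nonempty fun i _ => hzero i,
        Nat.cast_sum]
      exact sum_congr rfl fun i _ => constTerm_eq_multinomial _
termination_by n a => n + ∑ i, a i
decreasing_by
  all_goals show _ < n + 1 + ∑ i, a i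
  · have h := Fin.sum_univ_succ (a ∘ Equiv.swap 0 i)
    simp only [h0, zero_add, Function.comp_apply, Equiv.sum_comp] at h
    simp only [Fin.tail, Function.comp_apply, ← h]
    omega
  · have hai : a i ≠ 0 := fun h => hzero ⟨i, h⟩
    have : ∑ j, Function.update a i (a i - 1) j < ∑ j, a j := by
      rw [sum_update_sub_one (mem_univ i) hai]
      exact Nat.sub_lt (pos_of_ne_zero fun h => hai (sum_eq_zero_iff.mp h i (mem_univ i)))
        one_pos
    omega

end Fin

end Dyson

theorem dyson_special_case_general (m : ℕ) :
    MvPolynomial.coeff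
        (Finsupp.equivFunOnFinite.symm (fun _ : Fin m => 2 * m - 2))
        (∏ i : Fin m, ∏ j ∈ Finset.Ioi i,
          ((MvPolynomial.X i - MvPolynomial.X j) ^ 4 :
            MvPolynomial (Fin m) ℤ)) =
      (((2 * m).factorial / 2 ^ m : ℕ) : ℤ) := by
  have hpoly : (Dyson.poly (fun _ => 2) : MvPolynomial (Fin m) ℤ) =
      ∏ i, ∏ j ∈ Ioi i, (X i - X j) ^ 4 := by
    simpa using Dyson.poly_const_two_mul (n := m) (R := ℤ) 1
  have hexp : Dyson.exponent (fun _ : Fin m => 2) =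
      Finsupp.equivFunOnFinite.symm fun _ => 2 * m - 2 := by
    ext j
    simp only [Dyson.exponent_apply, sum_const, mem_univ, card_erase_of_mem, Finset.card_univ,
      Fintype.card_fin, smul_eq_mul, Finsupp.equivFunOnFinite_symm_apply_apply]
    omega
  have hmult : Nat.multinomial univ (fun _ : Fin m => 2) = (2 * m)! / 2 ^ m := by
    simp [Nat.multinomial, mul_comm]
  rw [← hexp, ← hpoly, ← hmult]
  exact Dyson.constTerm_eq_multinomial _

/-- The coefficient of `∏ x_i^(2m-2)` in `∏_{i<j} (x_i - x_j)^4`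
equals `(2m)!/2^m`. -/
theorem dyson_special_case (m : ℕ) (hm : 0 < m) :
    MvPolynomial.coeff
        (Finsupp.equivFunOnFinite.symm (fun _ : Fin m => 2 * m - 2))
        (∏ i : Fin m, ∏ j ∈ Finset.Ioi i,
          ((MvPolynomial.X i - MvPolynomial.X j) ^ 4 :
            MvPolynomial (Fin m) ℤ)) =
      (((2 * m).factorial / 2 ^ m : ℕ) : ℤ) :=
  dyson_special_case_general m
end
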